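/- Let G be a connected graph with n vertices and m edges whose minimum arrangement cost is at most m + k. Then either G has a k-separating bridge, or n ≤ 4k + 1. -/

import Mathlib

/-!
Read the arrangement as a sequence of `n - 1` cuts, the cut `i` separating the first `i + 1`
positions from the others; an edge crosses as many cuts as its length, so the cost exceeds `m`
by the total excess `∑ (length - 1) ≤ k`. A middle cut `i` (with more than `k` vertices on each
side) crossed by a single edge would make that edge a `k`-separating bridge. At most one edge of
length `1` crosses a given cut, so otherwise every one of the `n - 1 - 2k` middle cuts is crossed
by an edge of length at least `2`. Such an edge has length at most twice its excess, whence
`n - 1 - 2k ≤ 2k`.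
-/

open Classical in
/-- The cost of an ordering `α` of the vertices of `G`: the sum over all edges `{u,v}` of
the length `|α(u) − α(v)|`. -/
noncomputable def arrangementCost {V : Type*} [Fintype V] (G : SimpleGraph V)
    (α : V ≃ Fin (Fintype.card V)) : ℕ :=
  ∑ e ∈ G.edgeFinset,
    Sym2.lift ⟨fun u v => ((α u : ℤ) - (α v : ℤ)).natAbs,
      fun u v => by simp only []; omega⟩ e

/-- A bridge `e = {u,v}` of `G` is `k`-separating if each of the two connected components of
`G − e` (the one of `u` and the one of `v`) has more than `k` vertices. -/
def HasKSeparatingBridge {V : Type*} (G : SimpleGraph V) (k : ℕ) : Prop :=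
  ∃ u v, G.Adj u v ∧ G.IsBridge s(u, v) ∧
    k < Nat.card {w | (G.deleteEdges {s(u, v)}).Reachable u w} ∧
    k < Nat.card {w | (G.deleteEdges {s(u, v)}).Reachable v w}

namespace SimpleGraph

variable {V : Type*} {G : SimpleGraph V} {S : Set V} {a b : V}

theorem Connected.reachable_deleteEdges_of_unique_exit (hconn : G.Connected) (hb : b ∉ S)
    (hexit : ∀ x y, G.Adj x y → x ∈ S → y ∉ S → x = a) {x : V} (hx : x ∈ S) :
    (G.deleteEdges {s(a, b)}).Reachable x a := by
  obtain ⟨p⟩ := hconn x a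
  induction p with
  | nil => rfl
  | @cons x v a hxv _ ih =>
    by_cases hv : v ∈ S
    · have hxv' : (G.deleteEdges {s(a, b)}).Adj x v := by
        refine (deleteEdges_adj ..).2 ⟨hxv, ?_⟩
        intro h
        rcases Sym2.eq_iff.1 (Set.mem_singleton_iff.1 h) with ⟨rfl, rfl⟩ | ⟨rfl, rfl⟩
        exacts [hb hv, hb hx]
      exact hxv'.reachable.trans (ih hexit hv)
    · rw [hexit x v hxv hx hv]

theorem hasKSeparatingBridge_of_unique_crossing [Finite V] (hconn : G.Connected) (hab : G.Adj a b)
    (ha : a ∈ S) (hb : b ∉ S) (hcross : ∀ x y, G.Adj x y → x ∈ S → y ∉ S → x = a ∧ y = b)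
    {k : ℕ} (hkS : k < S.ncard) (hkSc : k < Sᶜ.ncard) : HasKSeparatingBridge G k := by
  have hbridge : G.IsBridge s(a, b) := by
    refine isBridge_iff_forall_walk_mem_edges.2 fun p => ?_
    obtain ⟨d, hd, hdS, hdS'⟩ := p.exists_boundary_dart S ha hb
    obtain ⟨hda, hdb⟩ := hcross _ _ d.adj hdS hdS'
    have hdab : d.edge = s(a, b) := by rw [← hda, ← hdb]; rfl
    exact hdab ▸ List.mem_map_of_mem hd
  have hsideS : S ⊆ {w | (G.deleteEdges {s(a, b)}).Reachable a w} := fun x hx =>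
    (hconn.reachable_deleteEdges_of_unique_exit hb (fun x y h hx hy => (hcross x y h hx hy).1)
      hx).symm
  have hsideSc : Sᶜ ⊆ {w | (G.deleteEdges {s(a, b)}).Reachable b w} := fun x hx => by
    rw [Sym2.eq_swap]
    exact (hconn.reachable_deleteEdges_of_unique_exit (not_not.2 ha)
      (fun x y h hx hy => (hcross y x h.symm (not_not.1 hy) hx).2) hx).symm
  refine ⟨a, b, hab, hbridge, ?_, ?_⟩ <;> rw [Nat.card_coe_set_eq]
  exacts [hkS.trans_le (Set.ncard_le_ncard hsideS), hkSc.trans_le (Set.ncard_le_ncard hsideSc)]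

end SimpleGraph

theorem Equiv.ncard_setOf_val_le {V : Type*} {n : ℕ} (α : V ≃ Fin n) {i : ℕ} (hi : i < n) :
    {v | (α v : ℕ) ≤ i}.ncard = i + 1 := by
  have hpre : {v | (α v : ℕ) ≤ i} = α ⁻¹' ↑(Finset.Iic (⟨i, hi⟩ : Fin n)) := by
    ext v; simp [Fin.le_def]
  rw [hpre, Set.ncard_preimage_of_injective_subset_range α.injective (by simp),
    Set.ncard_coe_finset, Fin.card_Iic]

theorem Finset.card_le_two_mul_sum_card_sub_one {ι α : Type*} [DecidableEq α] {s : Finset ι}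
    {t : ι → Finset α} {M : Finset α} (hM : ∀ x ∈ M, ∃ j ∈ s, x ∈ t j ∧ 2 ≤ (t j).card) :
    M.card ≤ 2 * ∑ j ∈ s, ((t j).card - 1) := by
  set L := s.filter fun j => 2 ≤ (t j).card
  have hcover : M ⊆ L.biUnion t := fun x hx => by
    obtain ⟨j, hj, hxj, hj2⟩ := hM x hx
    exact Finset.mem_biUnion.2 ⟨j, Finset.mem_filter.2 ⟨hj, hj2⟩, hxj⟩
  calc M.card ≤ (L.biUnion t).card := Finset.card_le_card hcover
    _ ≤ ∑ j ∈ L, (t j).card := Finset.card_biUnion_le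
    _ ≤ ∑ j ∈ L, 2 * ((t j).card - 1) :=
      Finset.sum_le_sum fun j hj => by have := (Finset.mem_filter.1 hj).2; omega
    _ ≤ ∑ j ∈ s, 2 * ((t j).card - 1) := Finset.sum_le_sum_of_subset (Finset.filter_subset _ _)
    _ = 2 * ∑ j ∈ s, ((t j).card - 1) := (Finset.mul_sum ..).symm

def crossedCuts {V : Type*} (p : V → ℕ) (e : Sym2 V) : Finset ℕ :=
  Finset.Ico (e.map p).inf (e.map p).sup

@[simp]
theorem crossedCuts_mk {V : Type*} (p : V → ℕ) (u v : V) :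
    crossedCuts p s(u, v) = Finset.Ico (p u ⊓ p v) (p u ⊔ p v) := rfl

section Arrangement

variable {V : Type*} [Fintype V] {G : SimpleGraph V} (α : V ≃ Fin (Fintype.card V))

open Classical in
theorem arrangementCost_eq_sum_card_crossedCuts :
    arrangementCost G α = ∑ e ∈ G.edgeFinset, (crossedCuts (fun v => (α v : ℕ)) e).card := by
  refine Finset.sum_congr rfl fun e _ => ?_
  induction e using Sym2.ind with
  | _ u v => simp; omega

open Classical in
theorem sum_card_crossedCuts_sub_one_le {k : ℕ}
    (hα : arrangementCost G α ≤ G.edgeFinset.card + k) :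
    ∑ e ∈ G.edgeFinset, ((crossedCuts (fun v => (α v : ℕ)) e).card - 1) ≤ k := by
  have hpos : ∀ e ∈ G.edgeFinset, 1 ≤ (crossedCuts (fun v => (α v : ℕ)) e).card := by
    intro e he
    induction e using Sym2.ind with
    | _ u v =>
      have hne : (α u : ℕ) ≠ α v := fun h => (G.mem_edgeFinset.1 he).ne (α.injective (Fin.ext h))
      simp; omega
  rw [Finset.sum_tsub_distrib _ hpos, ← arrangementCost_eq_sum_card_crossedCuts,
    ← Finset.card_eq_sum_ones]
  omega

theorem exists_long_edge_crossing (hconn : G.Connected) {k : ℕ}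
    (hG : ¬ HasKSeparatingBridge G k) {i : ℕ} (hki : k ≤ i) (hin : i + k + 2 ≤ Fintype.card V) :
    ∃ e ∈ G.edgeSet, i ∈ crossedCuts (fun v => (α v : ℕ)) e ∧
      2 ≤ (crossedCuts (fun v => (α v : ℕ)) e).card := by
  by_contra! hshort
  set S := {v | (α v : ℕ) ≤ i}
  set a := α.symm ⟨i, by omega⟩
  set b := α.symm ⟨i + 1, by omega⟩
  have hS : S.ncard = i + 1 := α.ncard_setOf_val_le (by omega)
  have hSc : Sᶜ.ncard = Fintype.card V - (i + 1) := by
    rw [Set.ncard_compl, hS, Nat.card_eq_fintype_card]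
  have ha : a ∈ S := by simp [S, a]
  have hb : b ∉ S := by simp [S, b]
  have hcross : ∀ x y, G.Adj x y → x ∈ S → y ∉ S → x = a ∧ y = b := by
    intro x y hxy hx hy
    simp only [S, Set.mem_ofPred_eq, not_le] at hx hy
    have hlen := hshort s(x, y) hxy (by simp; omega)
    simp only [crossedCuts_mk, Nat.card_Ico] at hlen
    constructor <;> rw [Equiv.eq_symm_apply] <;> ext <;> simp <;> omega
  obtain ⟨d, -, hdS, hdS'⟩ := (hconn a b).some.exists_boundary_dart S ha hb
  obtain ⟨hda, hdb⟩ := hcross _ _ d.adj hdS hdS'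
  exact hG (G.hasKSeparatingBridge_of_unique_crossing hconn (hda ▸ hdb ▸ d.adj) ha hb hcross
    (by omega) (by omega))

end Arrangement

open Classical in
/-- If `G` is a connected graph with `n` vertices and `m` edges whose minimum arrangement
cost is at most `m + k`, then either `G` has a `k`-separating bridge, or `n ≤ 4k + 1`. -/
theorem kSeparatingBridge_or_small {V : Type*} [Fintype V] (G : SimpleGraph V)
    (hconn : G.Connected) (k : ℕ)
    (hcost : ∃ α : V ≃ Fin (Fintype.card V), arrangementCost G α ≤ G.edgeFinset.card + k) :
    HasKSeparatingBridge G k ∨ Fintype.card V ≤ 4 * k + 1 := by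
  by_cases hG : HasKSeparatingBridge G k
  · exact Or.inl hG
  obtain ⟨α, hα⟩ := hcost
  have hmiddle := Finset.card_le_two_mul_sum_card_sub_one (s := G.edgeFinset)
    (M := Finset.Ico k (Fintype.card V - 1 - k)) fun i hi => by
      obtain ⟨hki, hin⟩ := Finset.mem_Ico.1 hi
      obtain ⟨e, he, hie, hlong⟩ := exists_long_edge_crossing α hconn hG hki (by omega)
      exact ⟨e, G.mem_edgeFinset.2 he, hie, hlong⟩
  have hexcess := sum_card_crossedCuts_sub_one_le α hα
  rw [Nat.card_Ico] at hmiddle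
  right
  omega
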